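/- Let t₀ ∈ ℂ and let (a, b, c) ∈ ℂ³. Set r = |a| + |b| + |c| and R = 1 / (104 + 8 r). Then there exist functions x, y, z : ℂ → ℂ that are complex-differentiable on the open ball of radius R centered at t₀, satisfy the complex Lorenz system there, and satisfy x(t₀) = a, y(t₀) = b, z(t₀) = c. -/

import Mathlib

/-!
The Taylor coefficients of a solution at `t₀` are determined recursively by comparing the
coefficients of `(t - t₀)ⁿ` on both sides of the system, the quadratic terms becoming Cauchy
products. If all coefficients of order at most `n` are bounded by `A Bⁿ`, a Cauchy product of
order `n` is bounded by `(n + 1) A² Bⁿ`, and the factor `n + 1` produced by differentiation cancels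
it: the coefficients of order `n + 1` are bounded by `(29 + A) A Bⁿ ≤ A Bⁿ⁺¹`, where `29` dominates
the linear parts `10 + 10`, `28 + 1` and `8 / 3`. With `A = |a| + |b| + |c|` and `B = 104 + 8 A`
the three power series converge on the ball of radius `1 / B`, where they may be differentiated
termwise, and the recursion turns into the Lorenz system.
-/

/-- The complex Lorenz system holds for `(x, y, z)` on the set `U`. -/
def LorenzSystemC (x y z : ℂ → ℂ) (U : Set ℂ) : Prop :=
  ∀ t ∈ U,
    HasDerivAt x (10 * (y t - x t)) t ∧
    HasDerivAt y (28 * x t - y t - x t * z t) t ∧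
    HasDerivAt z (-(8 / 3) * z t + x t * y t) t

open Finset

theorem hasSum_mul_sub_self_pow {R : Type*} [Ring R] [TopologicalSpace R] (f : ℕ → R)
    (t₀ : R) :
    HasSum (fun n => f n * (t₀ - t₀) ^ n) (f 0) := by
  simpa using hasSum_single (f := fun n => f n * (t₀ - t₀) ^ n) 0
    (fun n hn => by simp [zero_pow hn])

section PowerSeries

variable {𝕜 : Type*} [RCLike 𝕜]

theorem summable_norm_mul_pow_of_norm_le_geometric {f : ℕ → 𝕜} {A B : ℝ}
    (hf : ∀ n, ‖f n‖ ≤ A * B ^ n) {w : 𝕜} (hw : ‖w‖ < 1 / B) :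
    Summable fun n => ‖f n * w ^ n‖ := by
  have hB : 0 < B := one_div_pos.mp ((norm_nonneg w).trans_lt hw)
  have hq : B * ‖w‖ < 1 := by rwa [lt_div_iff₀ hB, mul_comm] at hw
  refine .of_nonneg_of_le (fun n => norm_nonneg _) (fun n => ?_)
    ((summable_geometric_of_lt_one (by positivity) hq).mul_left A)
  calc ‖f n * w ^ n‖ = ‖f n‖ * ‖w‖ ^ n := by rw [norm_mul, norm_pow]
    _ ≤ A * B ^ n * ‖w‖ ^ n := by gcongr; exact hf n
    _ = A * (B * ‖w‖) ^ n := by ring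

theorem hasDerivAt_tsum_mul_sub_pow {f : ℕ → 𝕜} {A B : ℝ} (hf : ∀ n, ‖f n‖ ≤ A * B ^ n)
    {t₀ t : 𝕜} (ht : ‖t - t₀‖ < 1 / B) :
    HasDerivAt (fun u => ∑' n, f n * (u - t₀) ^ n)
      (∑' n : ℕ, ((n : 𝕜) + 1) * f (n + 1) * (t - t₀) ^ n) t := by
  obtain ⟨ρ, htρ, hρB⟩ := exists_between ht
  have hρ : 0 < ρ := (norm_nonneg _).trans_lt htρ
  have hB : 0 < B := one_div_pos.mp (hρ.trans hρB)
  have hq : B * ρ < 1 := by rwa [lt_div_iff₀ hB, mul_comm] at hρB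
  set g' : ℕ → 𝕜 → 𝕜 := fun n u => f n * ((n : 𝕜) * (u - t₀) ^ (n - 1))
  set bound : ℕ → ℝ := fun n => A * B ^ n * (n * ρ ^ (n - 1))
  have hg' (n : ℕ) (u : 𝕜) (_ : u ∈ Metric.ball t₀ ρ) :
      HasDerivAt (fun u => f n * (u - t₀) ^ n) (g' n u) u := by
    simpa [g'] using (((hasDerivAt_id u).sub_const t₀).pow n).const_mul (f n)
  have hg'_le (n : ℕ) (u : 𝕜) (hu : u ∈ Metric.ball t₀ ρ) : ‖g' n u‖ ≤ bound n := by
    rw [mem_ball_iff_norm] at hu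
    simp only [g', bound, norm_mul, norm_pow, RCLike.norm_natCast]
    gcongr
    exacts [(norm_nonneg _).trans (hf n), hf n]
  have hbound : Summable bound := by
    rw [← summable_nat_add_iff 1]
    have hq' : ‖B * ρ‖ < 1 := by rwa [Real.norm_of_nonneg (by positivity)]
    refine (((summable_pow_mul_geometric_of_norm_lt_one 1 hq').add
      (summable_geometric_of_norm_lt_one hq')).mul_left (A * B)).congr fun n => ?_
    simp only [bound, Nat.add_sub_cancel]
    push_cast
    ring
  have ht' : t ∈ Metric.ball t₀ ρ := mem_ball_iff_norm.mpr htρ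
  refine (hasDerivAt_tsum_of_isPreconnected hbound Metric.isOpen_ball
    (convex_ball t₀ ρ).isPreconnected hg' hg'_le (Metric.mem_ball_self hρ)
    (hasSum_mul_sub_self_pow f t₀).summable ht').congr_deriv ?_
  rw [(Summable.of_norm_bounded hbound fun n => hg'_le n t ht').tsum_eq_zero_add]
  simp only [g', CharP.cast_eq_zero, zero_mul, mul_zero, zero_add, Nat.add_sub_cancel]
  exact tsum_congr fun n => by push_cast; ring

end PowerSeries

theorem hasSum_sum_range_mul_pow {R : Type*} [NormedCommRing R] [CompleteSpace R]
    {f g : ℕ → R} {w : R} (hf : Summable fun n => ‖f n * w ^ n‖)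
    (hg : Summable fun n => ‖g n * w ^ n‖) :
    HasSum (fun n => (∑ k ∈ range (n + 1), f k * g (n - k)) * w ^ n)
      ((∑' n, f n * w ^ n) * ∑' n, g n * w ^ n) := by
  have hterm (n : ℕ) : ∑ k ∈ range (n + 1), f k * w ^ k * (g (n - k) * w ^ (n - k)) =
      (∑ k ∈ range (n + 1), f k * g (n - k)) * w ^ n := by
    rw [sum_mul]
    refine sum_congr rfl fun k hk => ?_
    rw [← pow_mul_pow_sub w (Nat.lt_succ_iff.mp (mem_range.mp hk))]
    ring
  simpa only [hterm] using hasSum_sum_range_mul_of_summable_norm hf hg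

theorem norm_sum_range_mul_sub_le {R : Type*} [SeminormedRing R] {f g : ℕ → R} {A B : ℝ}
    {n : ℕ} (hf : ∀ k ≤ n, ‖f k‖ ≤ A * B ^ k) (hg : ∀ k ≤ n, ‖g k‖ ≤ A * B ^ k) :
    ‖∑ k ∈ range (n + 1), f k * g (n - k)‖ ≤ (n + 1) * (A * A * B ^ n) := by
  calc ‖∑ k ∈ range (n + 1), f k * g (n - k)‖
      ≤ ∑ k ∈ range (n + 1), ‖f k‖ * ‖g (n - k)‖ :=
        (norm_sum_le _ _).trans (sum_le_sum fun k _ => norm_mul_le _ _)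
    _ ≤ ∑ _k ∈ range (n + 1), A * A * B ^ n := by
        refine sum_le_sum fun k hk => ?_
        have hkn : k ≤ n := Nat.lt_succ_iff.mp (mem_range.mp hk)
        calc ‖f k‖ * ‖g (n - k)‖ ≤ A * B ^ k * (A * B ^ (n - k)) :=
              mul_le_mul (hf k hkn) (hg _ (Nat.sub_le n k)) (norm_nonneg _)
                ((norm_nonneg _).trans (hf k hkn))
          _ = A * A * B ^ n := by rw [← pow_mul_pow_sub B hkn]; ring
    _ = (n + 1) * (A * A * B ^ n) := by simp

theorem le_mul_pow_succ_of_succ_mul_le {x A B C : ℝ} {n : ℕ} (hA : 0 ≤ A) (hB : 0 ≤ B)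
    (hC : 0 ≤ C) (hCAB : C + A ≤ B)
    (h : (n + 1) * x ≤ C * (A * B ^ n) + (n + 1) * (A * A * B ^ n)) :
    x ≤ A * B ^ (n + 1) := by
  have hM : 0 ≤ A * B ^ n := by positivity
  have : (n + 1) * x ≤ (n + 1) * (A * B ^ (n + 1)) := by
    calc (n + 1) * x ≤ C * (A * B ^ n) + (n + 1) * (A * A * B ^ n) := h
      _ ≤ (n + 1) * ((C + A) * (A * B ^ n)) := by
          have : 0 ≤ (n : ℝ) * (C * (A * B ^ n)) := by positivity
          linarith
      _ ≤ (n + 1) * (B * (A * B ^ n)) := by gcongr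
      _ = (n + 1) * (A * B ^ (n + 1)) := by ring
  exact le_of_mul_le_mul_left this (by positivity)

-- Summing over `Fin (n + 1)` rather than `range (n + 1)` lets Lean see that the recursion
-- terminates.
mutual
noncomputable def lorenzX (a b c : ℂ) : ℕ → ℂ
  | 0 => a
  | n + 1 => 10 * (lorenzY a b c n - lorenzX a b c n) / (n + 1)
noncomputable def lorenzY (a b c : ℂ) : ℕ → ℂ
  | 0 => b
  | n + 1 => (28 * lorenzX a b c n - lorenzY a b c n -
      ∑ k : Fin (n + 1), lorenzX a b c k * lorenzZ a b c (n - k)) / (n + 1)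
noncomputable def lorenzZ (a b c : ℂ) : ℕ → ℂ
  | 0 => c
  | n + 1 => (-(8 / 3) * lorenzZ a b c n +
      ∑ k : Fin (n + 1), lorenzX a b c k * lorenzY a b c (n - k)) / (n + 1)
end

section LorenzCoefficients

variable (a b c : ℂ) (n : ℕ)

theorem succ_mul_lorenzX_succ :
    ((n : ℂ) + 1) * lorenzX a b c (n + 1) = 10 * (lorenzY a b c n - lorenzX a b c n) := by
  rw [lorenzX, mul_div_cancel₀ _ n.cast_add_one_ne_zero]

theorem succ_mul_lorenzY_succ :
    ((n : ℂ) + 1) * lorenzY a b c (n + 1) = 28 * lorenzX a b c n - lorenzY a b c n -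
      ∑ k ∈ range (n + 1), lorenzX a b c k * lorenzZ a b c (n - k) := by
  rw [lorenzY, mul_div_cancel₀ _ n.cast_add_one_ne_zero,
    Fin.sum_univ_eq_sum_range (fun k => lorenzX a b c k * lorenzZ a b c (n - k))]

theorem succ_mul_lorenzZ_succ :
    ((n : ℂ) + 1) * lorenzZ a b c (n + 1) = -(8 / 3) * lorenzZ a b c n +
      ∑ k ∈ range (n + 1), lorenzX a b c k * lorenzY a b c (n - k) := by
  rw [lorenzZ, mul_div_cancel₀ _ n.cast_add_one_ne_zero,
    Fin.sum_univ_eq_sum_range (fun k => lorenzX a b c k * lorenzY a b c (n - k))]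

end LorenzCoefficients

theorem norm_lorenz_le {a b c : ℂ} {A B : ℝ} (ha : ‖a‖ ≤ A) (hb : ‖b‖ ≤ A) (hc : ‖c‖ ≤ A)
    (hAB : 29 + A ≤ B) (n : ℕ) :
    ‖lorenzX a b c n‖ ≤ A * B ^ n ∧ ‖lorenzY a b c n‖ ≤ A * B ^ n ∧
      ‖lorenzZ a b c n‖ ≤ A * B ^ n := by
  have hA : 0 ≤ A := (norm_nonneg a).trans ha
  have hB : 0 ≤ B := by linarith
  induction n using Nat.strong_induction_on with
  | _ n ih =>
  obtain _ | n := n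
  · simpa [lorenzX, lorenzY, lorenzZ] using ⟨ha, hb, hc⟩
  have hX (k) (hk : k ≤ n) := (ih k (by omega)).1
  have hY (k) (hk : k ≤ n) := (ih k (by omega)).2.1
  have hZ (k) (hk : k ≤ n) := (ih k (by omega)).2.2
  have hXZ := norm_sum_range_mul_sub_le hX hZ
  have hXY := norm_sum_range_mul_sub_le hX hY
  have hlin : 0 ≤ A * B ^ n := by positivity
  have hquad : 0 ≤ (n + 1) * (A * A * B ^ n) := by positivity
  have hnorm (u : ℂ) : ‖((n : ℂ) + 1) * u‖ = (n + 1) * ‖u‖ := by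
    rw [norm_mul]; norm_cast
  refine ⟨?_, ?_, ?_⟩ <;> refine le_mul_pow_succ_of_succ_mul_le hA hB (by norm_num) hAB ?_
  · rw [← hnorm, succ_mul_lorenzX_succ, norm_mul]
    have := norm_sub_le (lorenzY a b c n) (lorenzX a b c n)
    norm_num
    linarith [hX n le_rfl, hY n le_rfl]
  · rw [← hnorm, succ_mul_lorenzY_succ]
    have := norm_sub_le (28 * lorenzX a b c n - lorenzY a b c n)
      (∑ k ∈ range (n + 1), lorenzX a b c k * lorenzZ a b c (n - k))
    have := norm_sub_le (28 * lorenzX a b c n) (lorenzY a b c n)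
    rw [norm_mul] at this
    norm_num at this
    linarith [hX n le_rfl, hY n le_rfl]
  · rw [← hnorm, succ_mul_lorenzZ_succ]
    have := norm_add_le (-(8 / 3) * lorenzZ a b c n)
      (∑ k ∈ range (n + 1), lorenzX a b c k * lorenzY a b c (n - k))
    rw [norm_mul] at this
    norm_num at this ⊢
    linarith [hZ n le_rfl]

section LorenzSeries

variable {a b c w : ℂ}

theorem hasSum_succ_mul_lorenzX_succ (hX : Summable fun n => ‖lorenzX a b c n * w ^ n‖)
    (hY : Summable fun n => ‖lorenzY a b c n * w ^ n‖) :
    HasSum (fun n : ℕ => ((n : ℂ) + 1) * lorenzX a b c (n + 1) * w ^ n)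
      (10 * ((∑' n, lorenzY a b c n * w ^ n) - ∑' n, lorenzX a b c n * w ^ n)) := by
  refine ((hY.of_norm.hasSum.sub hX.of_norm.hasSum).mul_left 10).congr_fun fun n => ?_
  linear_combination w ^ n * succ_mul_lorenzX_succ a b c n

theorem hasSum_succ_mul_lorenzY_succ (hX : Summable fun n => ‖lorenzX a b c n * w ^ n‖)
    (hY : Summable fun n => ‖lorenzY a b c n * w ^ n‖)
    (hZ : Summable fun n => ‖lorenzZ a b c n * w ^ n‖) :
    HasSum (fun n : ℕ => ((n : ℂ) + 1) * lorenzY a b c (n + 1) * w ^ n)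
      (28 * (∑' n, lorenzX a b c n * w ^ n) - (∑' n, lorenzY a b c n * w ^ n) -
        (∑' n, lorenzX a b c n * w ^ n) * ∑' n, lorenzZ a b c n * w ^ n) := by
  refine (((hX.of_norm.hasSum.mul_left 28).sub hY.of_norm.hasSum).sub
    (hasSum_sum_range_mul_pow hX hZ)).congr_fun fun n => ?_
  linear_combination w ^ n * succ_mul_lorenzY_succ a b c n

theorem hasSum_succ_mul_lorenzZ_succ (hX : Summable fun n => ‖lorenzX a b c n * w ^ n‖)
    (hY : Summable fun n => ‖lorenzY a b c n * w ^ n‖)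
    (hZ : Summable fun n => ‖lorenzZ a b c n * w ^ n‖) :
    HasSum (fun n : ℕ => ((n : ℂ) + 1) * lorenzZ a b c (n + 1) * w ^ n)
      (-(8 / 3) * (∑' n, lorenzZ a b c n * w ^ n) +
        (∑' n, lorenzX a b c n * w ^ n) * ∑' n, lorenzY a b c n * w ^ n) := by
  refine ((hZ.of_norm.hasSum.mul_left (-(8 / 3))).add
    (hasSum_sum_range_mul_pow hX hY)).congr_fun fun n => ?_
  linear_combination w ^ n * succ_mul_lorenzZ_succ a b c n

end LorenzSeries

/-- Given `t₀ ∈ ℂ` and `(a, b, c) ∈ ℂ³`, set `r = |a| + |b| + |c|` and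
`R = 1 / (104 + 8 r)`. Then there is a solution of the complex Lorenz system on the
open ball of radius `R` about `t₀` with values `(a, b, c)` at `t₀`. -/
theorem lorenz_local_complex_solution (t₀ : ℂ) (a b c : ℂ) :
    ∃ x y z : ℂ → ℂ,
      LorenzSystemC x y z
        (Metric.ball t₀ (1 / (104 + 8 * (‖a‖ + ‖b‖ + ‖c‖)))) ∧
      x t₀ = a ∧ y t₀ = b ∧ z t₀ = c := by
  have := norm_nonneg a; have := norm_nonneg b; have := norm_nonneg c
  have hcoeff := norm_lorenz_le (a := a) (b := b) (c := c) (A := ‖a‖ + ‖b‖ + ‖c‖)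
    (B := 104 + 8 * (‖a‖ + ‖b‖ + ‖c‖)) (by linarith) (by linarith) (by linarith) (by linarith)
  have hX n := (hcoeff n).1
  have hY n := (hcoeff n).2.1
  have hZ n := (hcoeff n).2.2
  refine ⟨fun t => ∑' n, lorenzX a b c n * (t - t₀) ^ n,
    fun t => ∑' n, lorenzY a b c n * (t - t₀) ^ n,
    fun t => ∑' n, lorenzZ a b c n * (t - t₀) ^ n, fun t ht => ?_, ?_, ?_, ?_⟩
  · rw [mem_ball_iff_norm] at ht
    have sX := summable_norm_mul_pow_of_norm_le_geometric hX ht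
    have sY := summable_norm_mul_pow_of_norm_le_geometric hY ht
    have sZ := summable_norm_mul_pow_of_norm_le_geometric hZ ht
    exact ⟨(hasDerivAt_tsum_mul_sub_pow hX ht).congr_deriv
        (hasSum_succ_mul_lorenzX_succ sX sY).tsum_eq,
      (hasDerivAt_tsum_mul_sub_pow hY ht).congr_deriv
        (hasSum_succ_mul_lorenzY_succ sX sY sZ).tsum_eq,
      (hasDerivAt_tsum_mul_sub_pow hZ ht).congr_deriv
        (hasSum_succ_mul_lorenzZ_succ sX sY sZ).tsum_eq⟩
  · exact (hasSum_mul_sub_self_pow _ t₀).tsum_eq.trans (by rw [lorenzX])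
  · exact (hasSum_mul_sub_self_pow _ t₀).tsum_eq.trans (by rw [lorenzY])
  · exact (hasSum_mul_sub_self_pow _ t₀).tsum_eq.trans (by rw [lorenzZ])
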